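/- arXiv:math/0503619 — 6 statements merged into one kernel-verified Lean document; each statement's English description precedes it below -/
import Mathlib

section
/- If σ and τ are convex cones in a finite-dimensional real vector space V that are each equal to their double dual (i.e., closed convex cones), then the dual cone of their intersection equals the Minkowski sum of their dual cones: (σ ∩ τ)^∨ = σ^∨ + τ^∨, provided σ and τ are polyhedral cones. -/
open InnerProductSpace RealInnerProductSpace Pointwise

/-- A polyhedral cone: the set of nonnegative linear combinations of a finite set of vectors. -/
def IsPolyhedralCone {V : Type*} [NormedAddCommGroup V] [InnerProductSpace ℝ V]
    (σ : Set V) : Prop :=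
  ∃ t : Finset V, σ = {x | ∃ c : V → ℝ, (∀ v, 0 ≤ c v) ∧ x = ∑ v ∈ t, c v • v}

namespace PolyAux

variable {V : Type*} [NormedAddCommGroup V] [InnerProductSpace ℝ V]


/-- Cone generated by a finite family. -/
def coneOf {ι : Type*} [Fintype ι] (f : ι → V) : Set V :=
  {x | ∃ c : ι → ℝ, (∀ i, 0 ≤ c i) ∧ x = ∑ i, c i • f i}

theorem zero_mem_coneOf {ι : Type*} [Fintype ι] (f : ι → V) : (0 : V) ∈ coneOf f :=
  ⟨0, fun _ => le_rfl, by simp⟩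

theorem add_mem_coneOf {ι : Type*} [Fintype ι] {f : ι → V} {x y : V}
    (hx : x ∈ coneOf f) (hy : y ∈ coneOf f) : x + y ∈ coneOf f := by
  obtain ⟨c, hc, rfl⟩ := hx
  obtain ⟨d, hd, rfl⟩ := hy
  exact ⟨c + d, fun i => add_nonneg (hc i) (hd i), by simp [add_smul, Finset.sum_add_distrib]⟩

theorem smul_mem_coneOf {ι : Type*} [Fintype ι] {f : ι → V} {x : V} {r : ℝ}
    (hr : 0 ≤ r) (hx : x ∈ coneOf f) : r • x ∈ coneOf f := by
  obtain ⟨c, hc, rfl⟩ := hx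
  exact ⟨r • c, fun i => mul_nonneg hr (hc i), by simp [Finset.smul_sum, smul_smul]⟩

theorem mem_coneOf_self {ι : Type*} [Fintype ι] [DecidableEq ι] (f : ι → V) (i : ι) :
    f i ∈ coneOf f := by
  refine ⟨Pi.single i 1, fun j => ?_, ?_⟩
  · rcases eq_or_ne j i with rfl | h
    · simp
    · simp [Pi.single_apply, h]
  · simp [Pi.single_apply, ite_smul]

/-- The cone of a finite family is a polyhedral cone. -/
theorem isPolyhedralCone_coneOf {ι : Type*} [Fintype ι] (f : ι → V) :
    IsPolyhedralCone (coneOf f) := by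
  classical
  refine ⟨Finset.image f Finset.univ, ?_⟩
  ext x
  constructor
  · rintro ⟨c, hc, rfl⟩
    refine ⟨fun v => ∑ i ∈ Finset.univ.filter (f · = v), c i,
      fun v => Finset.sum_nonneg fun i _ => hc i, ?_⟩
    rw [← Finset.sum_fiberwise_of_maps_to (g := f) (fun i _ => Finset.mem_image_of_mem f (Finset.mem_univ i)) (fun i => c i • f i)]
    refine Finset.sum_congr rfl fun v hv => ?_
    rw [Finset.sum_smul]
    refine Finset.sum_congr rfl fun i hi => ?_
    rw [(Finset.mem_filter.1 hi).2]
  · rintro ⟨C, hC, rfl⟩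
    refine ⟨fun i => C (f i) / (Finset.univ.filter (f · = f i)).card, fun i =>
      div_nonneg (hC _) (Nat.cast_nonneg _), ?_⟩
    rw [← Finset.sum_fiberwise_of_maps_to (g := f)
      (fun i _ => Finset.mem_image_of_mem f (Finset.mem_univ i))
      (fun i => (C (f i) / (Finset.univ.filter (f · = f i)).card) • f i)]
    refine Finset.sum_congr rfl fun v hv => ?_
    have hcard : ((Finset.univ.filter (f · = v)).card : ℝ) ≠ 0 := by
      obtain ⟨i, _, rfl⟩ := Finset.mem_image.1 hv
      have : i ∈ Finset.univ.filter (f · = f i) := by simp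
      exact_mod_cast Finset.card_ne_zero_of_mem this
    have : ∀ i ∈ Finset.univ.filter (f · = v),
        (C (f i) / (Finset.univ.filter (f · = f i)).card) • f i
          = (C v / (Finset.univ.filter (f · = v)).card) • v := by
      intro i hi
      rw [(Finset.mem_filter.1 hi).2]
    rw [Finset.sum_congr rfl this, Finset.sum_const, ← Nat.cast_smul_eq_nsmul ℝ, smul_smul,
      mul_div_cancel₀ _ hcard]

/-- Conversely, a polyhedral cone is a cone of a finite family. -/
theorem exists_coneOf {σ : Set V} (h : IsPolyhedralCone σ) :
    ∃ t : Finset V, σ = coneOf ((↑) : t → V) := by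
  classical
  obtain ⟨t, rfl⟩ := h
  refine ⟨t, ?_⟩
  ext x
  constructor
  · rintro ⟨c, hc, rfl⟩
    exact ⟨fun i => c i, fun i => hc i, by rw [Finset.sum_coe_sort t (fun v => c v • v)]⟩
  · rintro ⟨c, hc, rfl⟩
    refine ⟨fun v => if h : v ∈ t then c ⟨v, h⟩ else 0, fun v => ?_, ?_⟩
    · dsimp only; split <;> simp [hc _]
    · rw [← Finset.sum_coe_sort t (fun v => (if h : v ∈ t then c ⟨v, h⟩ else 0) • v)]
      refine Finset.sum_congr rfl fun i _ => ?_
      rw [dif_pos i.2]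



/-- Carathéodory-type lemma for cones. -/
theorem caratheodory {ι : Type*} [Fintype ι] (f : ι → V) :
    ∀ (n : ℕ) (c : ι → ℝ), (Finset.univ.filter (c · ≠ 0)).card ≤ n → (∀ i, 0 ≤ c i) →
      ∃ s : Finset ι, LinearIndependent ℝ (fun i : s => f i) ∧
        (∑ i, c i • f i) ∈ coneOf (fun i : s => f i) := by
  classical
  intro n
  induction n with
  | zero =>
    intro c hcard hc
    have hzero : ∀ i, c i = 0 := by
      intro i
      by_contra h
      have hmem : i ∈ Finset.univ.filter (c · ≠ 0) := by simp [h]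
      have := Finset.card_pos.2 ⟨i, hmem⟩
      omega
    exact ⟨∅, linearIndependent_empty_type, 0, fun i => le_rfl, by simp [hzero]⟩
  | succ n ih =>
    intro c hcard hc
    set s₀ : Finset ι := Finset.univ.filter (c · ≠ 0) with hs₀
    by_cases hli : LinearIndependent ℝ (fun i : s₀ => f i)
    · refine ⟨s₀, hli, fun i => c i, fun i => hc i, ?_⟩
      rw [Finset.sum_coe_sort s₀ (fun i => c i • f i)]
      symm
      apply Finset.sum_subset (Finset.subset_univ _)
      intro i _ hi
      have : c i = 0 := by
        by_contra h
        exact hi (by simp [hs₀, h])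
      simp [this]
    · obtain ⟨g, hgsum, j₀, hj₀⟩ := Fintype.not_linearIndependent_iff.1 hli
      have key : ∀ d : ι → ℝ, (∑ i, d i • f i) = 0 → (∀ i, i ∉ s₀ → d i = 0) →
          (∃ i, 0 < d i) →
          ∃ s : Finset ι, LinearIndependent ℝ (fun i : s => f i) ∧
            (∑ i, c i • f i) ∈ coneOf (fun i : s => f i) := by
        intro d hdsum hdsupp ⟨ip, hip⟩
        set T : Finset ι := Finset.univ.filter (fun i => 0 < d i) with hT
        obtain ⟨i0, hi0T, hmin⟩ := T.exists_min_image (fun i => c i / d i) ⟨ip, by simp [hT, hip]⟩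
        have hdi0 : 0 < d i0 := (Finset.mem_filter.1 hi0T).2
        set lam : ℝ := c i0 / d i0 with hlam
        have hlam0 : 0 ≤ lam := div_nonneg (hc _) hdi0.le
        set c' : ι → ℝ := fun i => c i - lam * d i with hc'def
        have hc' : ∀ i, 0 ≤ c' i := by
          intro i
          rcases lt_or_ge 0 (d i) with hdi | hdi
          · have : lam ≤ c i / d i := hmin i (by simp [hT, hdi])
            have := (le_div_iff₀ hdi).1 this
            simp only [hc'def]; linarith
          · have : lam * d i ≤ 0 := mul_nonpos_of_nonneg_of_nonpos hlam0 hdi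
            have := hc i
            simp only [hc'def]; linarith
        have hsum : ∑ i, c' i • f i = ∑ i, c i • f i := by
          simp only [hc'def, sub_smul, mul_smul]
          rw [Finset.sum_sub_distrib, ← Finset.smul_sum, hdsum, smul_zero, sub_zero]
        have hi0s₀ : i0 ∈ s₀ := by
          by_contra h
          rw [hdsupp i0 h] at hdi0
          exact lt_irrefl 0 hdi0
        have hsubset : Finset.univ.filter (c' · ≠ 0) ⊆ s₀.erase i0 := by
          intro i hi
          have hne : c' i ≠ 0 := (Finset.mem_filter.1 hi).2
          refine Finset.mem_erase.2 ⟨?_, ?_⟩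
          · rintro rfl
            apply hne
            simp only [hc'def, hlam]
            field_simp
            ring
          · by_contra h
            apply hne
            have h1 : c i = 0 := by
              by_contra h2
              exact h (by simp [hs₀, h2])
            simp only [hc'def, h1, hdsupp i h, mul_zero, sub_zero]
        have hcard' : (Finset.univ.filter (c' · ≠ 0)).card ≤ n := by
          have h1 := Finset.card_le_card hsubset
          have h2 : (s₀.erase i0).card = s₀.card - 1 := Finset.card_erase_of_mem hi0s₀
          have h3 : 0 < s₀.card := Finset.card_pos.2 ⟨i0, hi0s₀⟩
          omega
        obtain ⟨s, hs1, hs2⟩ := ih c' hcard' hc'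
        rw [hsum] at hs2
        exact ⟨s, hs1, hs2⟩
      set d : ι → ℝ := fun i => if h : i ∈ s₀ then g ⟨i, h⟩ else 0 with hd
      have hdsum : ∑ i, d i • f i = 0 := by
        have h1 : ∑ i, d i • f i = ∑ i ∈ s₀, d i • f i :=
          (Finset.sum_subset (Finset.subset_univ s₀)
            (fun i _ hi => by simp [hd, dif_neg hi])).symm
        have h2 : ∑ i ∈ s₀, d i • f i = ∑ i : s₀, g i • f ↑i := by
          rw [← Finset.sum_coe_sort s₀ (fun i => d i • f i)]
          refine Finset.sum_congr rfl fun i _ => ?_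
          simp [hd]
        rw [h1, h2, hgsum]
      have hdsupp : ∀ i, i ∉ s₀ → d i = 0 := fun i hi => by simp [hd, dif_neg hi]
      have hdj₀ : d ↑j₀ ≠ 0 := by
        simpa [hd, dif_pos j₀.2] using hj₀
      rcases lt_or_ge 0 (d ↑j₀) with hpos | hnonpos
      · exact key d hdsum hdsupp ⟨j₀, hpos⟩
      · refine key (-d) ?_ (fun i hi => by simp [hdsupp i hi]) ⟨j₀, ?_⟩
        · simp only [Pi.neg_apply, neg_smul, Finset.sum_neg_distrib, hdsum, neg_zero]
        · simp only [Pi.neg_apply, neg_pos]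
          exact lt_of_le_of_ne hnonpos hdj₀

theorem coneOf_comp_subset {ι κ : Type*} [Fintype ι] [Fintype κ] (f : ι → V) (g : κ → ι) :
    coneOf (fun k => f (g k)) ⊆ coneOf f := by
  classical
  rintro x ⟨c, hc, rfl⟩
  refine ⟨fun i => ∑ k ∈ Finset.univ.filter (g · = i), c k,
    fun i => Finset.sum_nonneg fun k _ => hc k, ?_⟩
  rw [← Finset.sum_fiberwise Finset.univ g (fun k => c k • f (g k))]
  refine Finset.sum_congr rfl fun i _ => ?_
  rw [Finset.sum_smul]
  exact Finset.sum_congr rfl fun k hk => by rw [(Finset.mem_filter.1 hk).2]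

theorem isClosed_coneOf_of_linearIndependent [FiniteDimensional ℝ V] {ι : Type*} [Fintype ι]
    {f : ι → V} (hf : LinearIndependent ℝ f) : IsClosed (coneOf f) := by
  have hker : LinearMap.ker (Fintype.linearCombination ℝ f) = ⊥ := by
    rw [LinearMap.ker_eq_bot']
    intro c hcz
    rw [Fintype.linearCombination_apply] at hcz
    exact funext (Fintype.linearIndependent_iff.1 hf c hcz)
  have hemb := LinearMap.isClosedEmbedding_of_injective hker
  have himg : coneOf f = (Fintype.linearCombination ℝ f) '' {c : ι → ℝ | ∀ i, 0 ≤ c i} := by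
    ext x
    constructor
    · rintro ⟨c, hc, rfl⟩
      exact ⟨c, hc, by rw [Fintype.linearCombination_apply]⟩
    · rintro ⟨c, hc, rfl⟩
      exact ⟨c, hc, by rw [Fintype.linearCombination_apply]⟩
  have hcl : IsClosed {c : ι → ℝ | ∀ i, 0 ≤ c i} := by
    have : {c : ι → ℝ | ∀ i, 0 ≤ c i} = ⋂ i, {c : ι → ℝ | 0 ≤ c i} := by
      ext c; simp [Set.mem_iInter]
    rw [this]
    exact isClosed_iInter fun i => isClosed_le continuous_const (continuous_apply i)
  rw [himg]
  exact hemb.isClosedMap _ hcl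

theorem isClosed_coneOf [FiniteDimensional ℝ V] {ι : Type*} [Fintype ι] (f : ι → V) :
    IsClosed (coneOf f) := by
  classical
  have hunion : coneOf f =
      ⋃ s ∈ {s : Finset ι | LinearIndependent ℝ (fun i : s => f i)},
        coneOf (fun i : s => f i) := by
    apply Set.Subset.antisymm
    · rintro x ⟨c, hc, rfl⟩
      obtain ⟨s, hs1, hs2⟩ := caratheodory f (Finset.univ.filter (c · ≠ 0)).card c le_rfl hc
      exact Set.mem_biUnion hs1 hs2
    · refine Set.iUnion₂_subset fun s _ => ?_
      exact coneOf_comp_subset f (fun i : s => (i : ι))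
  rw [hunion]
  exact Set.Finite.isClosed_biUnion (Set.toFinite _)
    (fun s hs => isClosed_coneOf_of_linearIndependent hs)

theorem isClosed_polyhedral {σ : Set V} [FiniteDimensional ℝ V] (h : IsPolyhedralCone σ) :
    IsClosed σ := by
  obtain ⟨t, ht⟩ := exists_coneOf h
  rw [ht]
  exact isClosed_coneOf _


/-- Fourier–Motzkin elimination step: intersecting a finitely generated cone with
a halfspace yields a finitely generated cone. -/
theorem coneOf_inter_halfspace {ι : Type*} [Fintype ι] [DecidableEq ι] (f : ι → V) (v : V) :
    ∃ g : (ι ⊕ ι × ι) → V, coneOf f ∩ {x | 0 ≤ ⟪v, x⟫} = coneOf g := by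
  classical
  set a : ι → ℝ := fun i => ⟪v, f i⟫ with ha
  refine ⟨Sum.elim (fun i => if 0 ≤ a i then f i else 0)
    (fun p => if 0 ≤ a p.1 ∧ a p.2 < 0 then a p.1 • f p.2 - a p.2 • f p.1 else 0), ?_⟩
  set g : (ι ⊕ ι × ι) → V := Sum.elim (fun i => if 0 ≤ a i then f i else 0)
    (fun p => if 0 ≤ a p.1 ∧ a p.2 < 0 then a p.1 • f p.2 - a p.2 • f p.1 else 0) with hg
  have hfa : ∀ i, ⟪v, f i⟫ = a i := fun i => rfl
  have hg_mem : ∀ k, g k ∈ coneOf f := by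
    rintro (i | ⟨i, j⟩)
    · simp only [hg, Sum.elim_inl]
      split
      · exact mem_coneOf_self f i
      · exact zero_mem_coneOf f
    · simp only [hg, Sum.elim_inr]
      split
      · rename_i h
        rw [sub_eq_add_neg, ← neg_smul]
        exact add_mem_coneOf (smul_mem_coneOf h.1 (mem_coneOf_self f j))
          (smul_mem_coneOf (neg_nonneg.2 h.2.le) (mem_coneOf_self f i))
      · exact zero_mem_coneOf f
  have hg_inner : ∀ k, 0 ≤ ⟪v, g k⟫ := by
    rintro (i | ⟨i, j⟩)
    · simp only [hg, Sum.elim_inl]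
      split
      · assumption
      · rw [inner_zero_right]
    · simp only [hg, Sum.elim_inr]
      split
      · rename_i h
        rw [inner_sub_right, real_inner_smul_right, real_inner_smul_right, hfa, hfa]
        have : a i * a j - a j * a i = 0 := by ring
        rw [this]
      · rw [inner_zero_right]
  apply Set.Subset.antisymm
  · -- hard direction
    rintro x ⟨⟨c, hc, rfl⟩, hH⟩
    simp only [Set.mem_setOf_eq] at hH
    set A : ℝ := ∑ i, if 0 ≤ a i then c i * a i else 0 with hAdef
    set B : ℝ := ∑ j, if a j < 0 then -(c j * a j) else 0 with hBdef
    have hA : 0 ≤ A := Finset.sum_nonneg fun i _ => by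
      split
      · exact mul_nonneg (hc i) (by assumption)
      · exact le_rfl
    have hB : 0 ≤ B := Finset.sum_nonneg fun j _ => by
      split
      · rename_i h
        exact neg_nonneg.2 (mul_nonpos_of_nonneg_of_nonpos (hc j) h.le)
      · exact le_rfl
    have hAB : ⟪v, ∑ i, c i • f i⟫ = A - B := by
      rw [inner_sum, hAdef, hBdef, ← Finset.sum_sub_distrib]
      refine Finset.sum_congr rfl fun i _ => ?_
      rw [real_inner_smul_right, hfa]
      rcases le_or_gt 0 (a i) with h | h
      · rw [if_pos h, if_neg (not_lt.2 h)]
        ring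
      · rw [if_neg (not_le.2 h), if_pos h]
        ring
    have hBA : B ≤ A := by rw [hAB] at hH; linarith
    set xP : V := ∑ i, if 0 ≤ a i then c i • f i else 0 with hxP
    set xN : V := ∑ j, if a j < 0 then c j • f j else 0 with hxN
    have hx : ∑ i, c i • f i = xP + xN := by
      rw [hxP, hxN, ← Finset.sum_add_distrib]
      refine Finset.sum_congr rfl fun i _ => ?_
      rcases le_or_gt 0 (a i) with h | h
      · rw [if_pos h, if_neg (not_lt.2 h), add_zero]
      · rw [if_neg (not_le.2 h), if_pos h, zero_add]
    -- key double-sum identity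
    have hD : (∑ i, ∑ j, if 0 ≤ a i ∧ a j < 0 then
        (c i * c j) • (a i • f j - a j • f i) else 0) = A • xN + B • xP := by
      have step : ∀ i j, (if 0 ≤ a i ∧ a j < 0 then (c i * c j) • (a i • f j - a j • f i) else 0)
          = (if 0 ≤ a i then (c i * a i) • (if a j < 0 then c j • f j else 0) else 0)
            - (if a j < 0 then (c j * a j) • (if 0 ≤ a i then c i • f i else 0) else 0) := by
        intro i j
        rcases le_or_gt 0 (a i) with h1 | h1 <;> rcases lt_or_ge (a j) 0 with h2 | h2
        · rw [if_pos ⟨h1, h2⟩, if_pos h1, if_pos h2, if_pos h2, if_pos h1,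
            smul_sub, smul_smul, smul_smul, smul_smul, smul_smul]
          congr 1 <;> ring_nf
        · rw [if_neg (fun h => absurd h.2 (not_lt.2 h2)), if_pos h1, if_neg (not_lt.2 h2),
            if_neg (not_lt.2 h2), smul_zero, sub_zero]
        · rw [if_neg (fun h => absurd h.1 (not_le.2 h1)), if_neg (not_le.2 h1), if_pos h2,
            if_neg (not_le.2 h1), smul_zero, zero_sub, neg_zero]
        · rw [if_neg (fun h => absurd h.1 (not_le.2 h1)), if_neg (not_le.2 h1),
            if_neg (not_lt.2 h2), sub_zero]
      have hsumN : ∀ i : ι, (∑ j, if 0 ≤ a i then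
          (c i * a i) • (if a j < 0 then c j • f j else 0) else 0)
            = if 0 ≤ a i then (c i * a i) • xN else 0 := by
        intro i
        rcases le_or_gt 0 (a i) with h | h
        · simp only [if_pos h, hxN, Finset.smul_sum]
        · simp only [if_neg (not_le.2 h), Finset.sum_const_zero]
      have hsumP : ∀ j : ι, (∑ i, if a j < 0 then
          (c j * a j) • (if 0 ≤ a i then c i • f i else 0) else 0)
            = if a j < 0 then (c j * a j) • xP else 0 := by
        intro j
        rcases lt_or_ge (a j) 0 with h | h
        · simp only [if_pos h, hxP, Finset.smul_sum]
        · simp only [if_neg (not_lt.2 h), Finset.sum_const_zero]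
      calc (∑ i, ∑ j, if 0 ≤ a i ∧ a j < 0 then (c i * c j) • (a i • f j - a j • f i) else 0)
          = (∑ i, ∑ j, ((if 0 ≤ a i then (c i * a i) • (if a j < 0 then c j • f j else 0) else 0)
            - (if a j < 0 then (c j * a j) • (if 0 ≤ a i then c i • f i else 0) else 0))) :=
            Finset.sum_congr rfl fun i _ => Finset.sum_congr rfl fun j _ => step i j
        _ = (∑ i, ∑ j, if 0 ≤ a i then (c i * a i) • (if a j < 0 then c j • f j else 0) else 0)
            - (∑ i, ∑ j, if a j < 0 then (c j * a j) • (if 0 ≤ a i then c i • f i else 0)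
              else 0) := by
            rw [← Finset.sum_sub_distrib]
            exact Finset.sum_congr rfl fun i _ => Finset.sum_sub_distrib _ _
        _ = (∑ i, if 0 ≤ a i then (c i * a i) • xN else 0)
            - (∑ j, if a j < 0 then (c j * a j) • xP else 0) := by
            congr 1
            · exact Finset.sum_congr rfl fun i _ => hsumN i
            · rw [Finset.sum_comm]
              exact Finset.sum_congr rfl fun j _ => hsumP j
        _ = A • xN + B • xP := by
            have e1 : (∑ i, if 0 ≤ a i then (c i * a i) • xN else 0) = A • xN := by
              rw [hAdef, Finset.sum_smul]
              refine Finset.sum_congr rfl fun i _ => ?_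
              split
              · rfl
              · rw [zero_smul]
            have e2 : (∑ j, if a j < 0 then (c j * a j) • xP else 0) = (-B) • xP := by
              rw [hBdef, neg_smul, Finset.sum_smul, ← Finset.sum_neg_distrib]
              refine Finset.sum_congr rfl fun j _ => ?_
              split
              · rw [neg_smul, neg_neg]
              · rw [zero_smul, neg_zero]
            rw [e1, e2, neg_smul, sub_neg_eq_add]
    rcases eq_or_lt_of_le hA with hA0 | hApos
    · -- case A = 0
      have hB0 : B = 0 := le_antisymm (by linarith) hB
      have hcz : ∀ j, a j < 0 → c j = 0 := by
        intro j hj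
        have hterm := (Finset.sum_eq_zero_iff_of_nonneg (fun k _ => by
          split
          · rename_i h
            exact neg_nonneg.2 (mul_nonpos_of_nonneg_of_nonpos (hc k) h.le)
          · exact le_rfl)).1 (hBdef ▸ hB0) j (Finset.mem_univ j)
        rw [if_pos hj, neg_eq_zero] at hterm
        rcases mul_eq_zero.1 hterm with h | h
        · exact h
        · exact absurd h hj.ne
      have hxN0 : xN = 0 := by
        rw [hxN]
        refine Finset.sum_eq_zero fun j _ => ?_
        split
        · rename_i h
          rw [hcz j h, zero_smul]
        · rfl
      refine ⟨Sum.elim (fun i => if 0 ≤ a i then c i else 0) (fun _ => 0), ?_, ?_⟩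
      · rintro (i | p)
        · simp only [Sum.elim_inl]
          split
          · exact hc i
          · exact le_rfl
        · exact le_rfl
      · rw [Fintype.sum_sum_type]
        simp only [Sum.elim_inl, Sum.elim_inr, zero_smul, Finset.sum_const_zero, add_zero,
          hg]
        rw [hx, hxN0, add_zero, hxP]
        refine Finset.sum_congr rfl fun i _ => ?_
        split
        · rfl
        · rw [zero_smul]
    · -- case A > 0
      have hAne : A ≠ 0 := ne_of_gt hApos
      refine ⟨Sum.elim (fun i => if 0 ≤ a i then c i * ((A - B)/A) else 0)
        (fun p => if 0 ≤ a p.1 ∧ a p.2 < 0 then c p.1 * c p.2 / A else 0), ?_, ?_⟩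
      · rintro (i | p)
        · simp only [Sum.elim_inl]
          split
          · exact mul_nonneg (hc i) (div_nonneg (by linarith) hApos.le)
          · exact le_rfl
        · simp only [Sum.elim_inr]
          split
          · exact div_nonneg (mul_nonneg (hc _) (hc _)) hApos.le
          · exact le_rfl
      · rw [Fintype.sum_sum_type, Fintype.sum_prod_type]
        simp only [Sum.elim_inl, Sum.elim_inr, hg]
        have e1 : (∑ i, (if 0 ≤ a i then c i * ((A - B)/A) else 0)
            • (if 0 ≤ a i then f i else 0)) = ((A - B)/A) • xP := by
          rw [hxP, Finset.smul_sum]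
          refine Finset.sum_congr rfl fun i _ => ?_
          rcases le_or_gt 0 (a i) with h | h
          · rw [if_pos h, if_pos h, if_pos h, smul_smul, mul_comm]
          · rw [if_neg (not_le.2 h), if_neg (not_le.2 h), if_neg (not_le.2 h),
              zero_smul, smul_zero]
        have e2 : (∑ i, ∑ j, (if 0 ≤ a i ∧ a j < 0 then c i * c j / A else 0)
            • (if 0 ≤ a i ∧ a j < 0 then a i • f j - a j • f i else 0))
              = xN + (B / A) • xP := by
          have : ∀ (i j : ι), (if 0 ≤ a i ∧ a j < 0 then c i * c j / A else 0)
              • (if 0 ≤ a i ∧ a j < 0 then a i • f j - a j • f i else 0)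
                = (1/A) • (if 0 ≤ a i ∧ a j < 0 then
                  (c i * c j) • (a i • f j - a j • f i) else 0) := by
            intro i j
            by_cases h : 0 ≤ a i ∧ a j < 0
            · rw [if_pos h, if_pos h, if_pos h, smul_smul]
              congr 1
              ring
            · rw [if_neg h, if_neg h, if_neg h, zero_smul, smul_zero]
          rw [Finset.sum_congr rfl fun i _ => Finset.sum_congr rfl fun j _ => this i j]
          simp only [← Finset.smul_sum]
          rw [hD, smul_add, smul_smul, smul_smul, one_div, inv_mul_cancel₀ hAne, one_smul,
            inv_mul_eq_div]
        rw [e1, e2, hx]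
        have : ((A - B)/A) • xP + (xN + (B / A) • xP)
            = (((A - B)/A + B / A) • xP) + xN := by
          rw [add_smul]
          abel
        rw [this]
        have hscalar : (A - B)/A + B / A = 1 := by
          field_simp
          ring
        rw [hscalar, one_smul]
  · -- easy direction
    rintro x ⟨c, hc, rfl⟩
    constructor
    · exact Finset.sum_induction _ (· ∈ coneOf f)
        (fun _ _ => add_mem_coneOf) (zero_mem_coneOf f)
        (fun k _ => smul_mem_coneOf (hc k) (hg_mem k))
    · simp only [Set.mem_setOf_eq, inner_sum]
      exact Finset.sum_nonneg fun k _ => by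
        rw [real_inner_smul_right]
        exact mul_nonneg (hc k) (hg_inner k)

theorem isPolyhedralCone_univ [FiniteDimensional ℝ V] :
    IsPolyhedralCone (Set.univ : Set V) := by
  classical
  set b := Module.finBasis ℝ V with hb
  have huniv : (Set.univ : Set V) = coneOf (Sum.elim (fun i => b i) (fun i => -(b i))) := by
    apply Set.Subset.antisymm
    · intro x _
      refine ⟨Sum.elim (fun i => max (b.repr x i) 0) (fun i => max (-(b.repr x i)) 0),
        ?_, ?_⟩
      · rintro (i | i) <;> exact le_max_right _ _
      · rw [Fintype.sum_sum_type]
        simp only [Sum.elim_inl, Sum.elim_inr, smul_neg]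
        rw [← Finset.sum_add_distrib]
        have : ∀ i, max (b.repr x i) 0 • b i + -(max (-(b.repr x i)) 0 • b i)
            = (b.repr x i) • b i := by
          intro i
          rw [← sub_eq_add_neg, ← sub_smul, max_zero_sub_max_neg_zero_eq_self]
        rw [Finset.sum_congr rfl fun i _ => this i, b.sum_repr x]
    · exact fun x _ => Set.mem_univ x
  rw [huniv]
  exact isPolyhedralCone_coneOf _

theorem inter_halfspace {C : Set V} (h : IsPolyhedralCone C) (v : V) :
    IsPolyhedralCone (C ∩ {x | 0 ≤ ⟪v, x⟫}) := by
  classical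
  obtain ⟨t, ht⟩ := exists_coneOf h
  obtain ⟨g, hg⟩ := coneOf_inter_halfspace ((↑) : t → V) v
  rw [ht, hg]
  exact isPolyhedralCone_coneOf g

theorem innerDualCone_coneOf [FiniteDimensional ℝ V] {ι : Type*} [Fintype ι] (f : ι → V) :
    (ProperCone.innerDual (coneOf f) : Set V) = {y | ∀ i, 0 ≤ ⟪f i, y⟫} := by
  classical
  ext y
  simp only [SetLike.mem_coe, ProperCone.mem_innerDual, Set.mem_setOf_eq]
  constructor
  · intro h i
    exact h (mem_coneOf_self f i)
  · rintro h x ⟨c, hc, rfl⟩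
    rw [sum_inner]
    exact Finset.sum_nonneg fun i _ => by
      rw [real_inner_smul_left]
      exact mul_nonneg (hc i) (h i)

theorem isPolyhedralCone_dualFinset [FiniteDimensional ℝ V] (t : Finset V) :
    IsPolyhedralCone {y : V | ∀ v ∈ t, 0 ≤ ⟪v, y⟫} := by
  classical
  induction t using Finset.induction_on with
  | empty => simpa using isPolyhedralCone_univ
  | @insert a s ha ih =>
    have : {y : V | ∀ v ∈ insert a s, 0 ≤ ⟪v, y⟫}
        = {y : V | ∀ v ∈ s, 0 ≤ ⟪v, y⟫} ∩ {x : V | 0 ≤ ⟪a, x⟫} := by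
      ext y
      simp only [Set.mem_setOf_eq, Set.mem_inter_iff, Finset.forall_mem_insert]
      tauto
    rw [this]
    exact inter_halfspace ih a

theorem dual_polyhedral {σ : Set V} [FiniteDimensional ℝ V] (h : IsPolyhedralCone σ) :
    IsPolyhedralCone (ProperCone.innerDual σ : Set V) := by
  classical
  obtain ⟨t, ht⟩ := exists_coneOf h
  rw [ht, innerDualCone_coneOf]
  have : {y : V | ∀ i : t, 0 ≤ ⟪(i : V), y⟫} = {y : V | ∀ v ∈ t, 0 ≤ ⟪v, y⟫} := by
    ext y
    exact ⟨fun h v hv => h ⟨v, hv⟩, fun h i => h i i.2⟩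
  rw [this]
  exact isPolyhedralCone_dualFinset t

theorem add_polyhedral {A B : Set V} (hA : IsPolyhedralCone A) (hB : IsPolyhedralCone B) :
    IsPolyhedralCone (A + B) := by
  classical
  obtain ⟨s, hs⟩ := exists_coneOf hA
  obtain ⟨t, ht⟩ := exists_coneOf hB
  have : A + B = coneOf (Sum.elim (fun i : s => (i : V)) (fun j : t => (j : V))) := by
    apply Set.Subset.antisymm
    · rintro x hx
      rw [Set.mem_add] at hx
      obtain ⟨y, hy, z, hz, rfl⟩ := hx
      rw [hs] at hy
      rw [ht] at hz
      obtain ⟨c, hc, rfl⟩ := hy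
      obtain ⟨d, hd, rfl⟩ := hz
      refine ⟨Sum.elim c d, ?_, ?_⟩
      · rintro (i | j)
        · exact hc i
        · exact hd j
      · rw [Fintype.sum_sum_type]
        simp
    · rintro x ⟨c, hc, rfl⟩
      rw [Fintype.sum_sum_type, Set.mem_add]
      refine ⟨∑ i : s, c (Sum.inl i) • (i : V), ?_, ∑ j : t, c (Sum.inr j) • (j : V), ?_, rfl⟩
      · rw [hs]
        exact ⟨fun i => c (Sum.inl i), fun i => hc _, rfl⟩
      · rw [ht]
        exact ⟨fun j => c (Sum.inr j), fun j => hc _, rfl⟩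
  rw [this]
  exact isPolyhedralCone_coneOf _


end PolyAux


open PolyAux in
/-- For polyhedral cones that are equal to their double duals, the dual of the
intersection is the Minkowski sum of the duals. -/
theorem dual_inter_eq_sum_dual {V : Type*} [NormedAddCommGroup V] [InnerProductSpace ℝ V]
    [FiniteDimensional ℝ V] (σ τ : Set V)
    (hσ : IsPolyhedralCone σ) (hτ : IsPolyhedralCone τ)
    (hσd : (ProperCone.innerDual (ProperCone.innerDual σ : Set V) : Set V) = σ)
    (hτd : (ProperCone.innerDual (ProperCone.innerDual τ : Set V) : Set V) = τ) :
    (ProperCone.innerDual (σ ∩ τ) : Set V) = (ProperCone.innerDual σ : Set V) + (ProperCone.innerDual τ : Set V) := by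
  classical
  let P : Submodule {c : ℝ // 0 ≤ c} V :=
    (ProperCone.innerDual σ).toSubmodule ⊔ (ProperCone.innerDual τ).toSubmodule
  have hPS : (P : Set V) = (ProperCone.innerDual σ : Set V) + (ProperCone.innerDual τ : Set V) :=
    Submodule.coe_sup _ _
  have hSpoly : IsPolyhedralCone ((ProperCone.innerDual σ : Set V) + (ProperCone.innerDual τ : Set V)) :=
    add_polyhedral (dual_polyhedral hσ) (dual_polyhedral hτ)
  have hKclosed : IsClosed (P : Set V) := by
    rw [hPS]
    exact isClosed_polyhedral hSpoly
  let K : ProperCone ℝ V := { toSubmodule := P, isClosed' := hKclosed }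
  have hKS : (K : Set V) = (ProperCone.innerDual σ : Set V) + (ProperCone.innerDual τ : Set V) := hPS
  have hbidual := ProperCone.innerDual_innerDual K
  -- the dual of K is σ ∩ τ
  have hdualK : ((ProperCone.innerDual (K : Set V)) : Set V) = σ ∩ τ := by
    ext x
    simp only [SetLike.mem_coe, ProperCone.mem_innerDual, Set.mem_inter_iff]
    constructor
    · intro h
      constructor
      · rw [← hσd]
        rw [SetLike.mem_coe, ProperCone.mem_innerDual]
        intro a ha
        refine h ?_
        rw [← SetLike.mem_coe, hKS, Set.mem_add]
        exact ⟨a, ha, 0, zero_mem (ProperCone.innerDual τ), add_zero a⟩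
      · rw [← hτd]
        rw [SetLike.mem_coe, ProperCone.mem_innerDual]
        intro b hb
        refine h ?_
        rw [← SetLike.mem_coe, hKS, Set.mem_add]
        exact ⟨0, zero_mem (ProperCone.innerDual σ), b, hb, zero_add b⟩
    · rintro ⟨hx1, hx2⟩ s hs
      rw [← SetLike.mem_coe, hKS, Set.mem_add] at hs
      obtain ⟨p, hp, q, hq, rfl⟩ := hs
      rw [← hσd, SetLike.mem_coe, ProperCone.mem_innerDual] at hx1
      rw [← hτd, SetLike.mem_coe, ProperCone.mem_innerDual] at hx2
      rw [inner_add_left]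
      exact add_nonneg (hx1 hp) (hx2 hq)
  calc (ProperCone.innerDual (σ ∩ τ) : Set V)
      = (ProperCone.innerDual (ProperCone.innerDual (K : Set V) : Set V) : Set V) := by rw [hdualK]
    _ = (K : Set V) := by rw [hbidual]
    _ = (ProperCone.innerDual σ : Set V) + (ProperCone.innerDual τ : Set V) := hKS
end

section
/- Gordan's lemma: if σ^∨ is a rational polyhedral cone in ℝ^n (the dual of a cone generated by finitely many lattice vectors), then the semigroup S_σ = σ^∨ ∩ ℤ^n is finitely generated as an additive monoid. -/
open RealInnerProductSpace

/-- The inclusion of the lattice `ℤ^n` into `ℝ^n`. -/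
def latticeIncl (n : ℕ) (u : Fin n → ℤ) : EuclideanSpace ℝ (Fin n) :=
  WithLp.toLp 2 (fun i => (u i : ℝ))

/-- The rational polyhedral cone generated by a finite set of lattice vectors. -/
def latticeCone (n : ℕ) (t : Finset (Fin n → ℤ)) : Set (EuclideanSpace ℝ (Fin n)) :=
  {x | ∃ c : (Fin n → ℤ) → ℝ, (∀ v, 0 ≤ c v) ∧ x = ∑ v ∈ t, c v • latticeIncl n v}

/-- The submonoid of lattice points of the dual cone of `σ`. -/
def latticeDual (n : ℕ) (σ : Set (EuclideanSpace ℝ (Fin n))) : AddSubmonoid (Fin n → ℤ) where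
  carrier := {u | latticeIncl n u ∈ (ProperCone.innerDual σ : Set (EuclideanSpace ℝ (Fin n)))}
  zero_mem' := by
    have : latticeIncl n 0 = 0 := by
      ext i; simp [latticeIncl]
    simp only [Set.mem_setOf_eq, this]
    exact (ProperCone.innerDual σ).zero_mem
  add_mem' := by
    intro a b ha hb
    have : latticeIncl n (a + b) = latticeIncl n a + latticeIncl n b := by
      ext i; simp [latticeIncl]
    simp only [Set.mem_setOf_eq, this] at *
    exact (ProperCone.innerDual σ).add_mem ha hb

/-- A submonoid of `ι → ℕ` (with `ι` finite) which is closed under subtraction of smaller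
elements is finitely generated.  This is the combinatorial heart of Gordan's lemma, proved
via Dickson's lemma. -/
theorem fg_of_sub_closed {ι : Type*} [Finite ι] (M : AddSubmonoid (ι → ℕ))
    (hsub : ∀ x ∈ M, ∀ y ∈ M, x ≤ y → y - x ∈ M) : M.FG := by
  classical
  cases nonempty_fintype ι
  -- the set of minimal nonzero elements of `M`
  set G : Set (ι → ℕ) := {x | x ∈ M ∧ x ≠ 0 ∧ ∀ y ∈ M, y ≠ 0 → y ≤ x → y = x} with hG
  have hGanti : IsAntichain (· ≤ ·) G := by
    intro a ha b hb hne hab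
    exact hne (hb.2.2 a ha.1 ha.2.1 hab)
  have hGfin : G.Finite :=
    hGanti.finite_of_partiallyWellOrderedOn
    ((Set.IsPWO.pi (s := fun _ : ι => (Set.univ : Set ℕ)) (fun _ => Set.isPWO_of_wellQuasiOrderedLE _)).mono (fun x _ => by simp))
  refine ⟨hGfin.toFinset, le_antisymm ?_ ?_⟩
  · rw [AddSubmonoid.closure_le]
    intro x hx
    simp only [Set.Finite.coe_toFinset, hG, Set.mem_setOf_eq] at hx
    exact hx.1
  · -- every element of `M` is a sum of minimal elements; induction on the total degree
    intro x hx
    have key : ∀ N : ℕ, ∀ x ∈ M, (∑ i, x i) ≤ N →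
        x ∈ AddSubmonoid.closure (hGfin.toFinset : Set (ι → ℕ)) := by
      intro N
      induction N with
      | zero =>
        intro x hx hN
        have : x = 0 := by
          funext i
          exact Finset.sum_eq_zero_iff.1 (Nat.le_zero.1 hN) i (Finset.mem_univ i)
        rw [this]; exact AddSubmonoid.zero_mem _
      | succ N ih =>
        intro x hx hN
        by_cases hx0 : x = 0
        · rw [hx0]; exact AddSubmonoid.zero_mem _
        -- pick a nonzero element of `M` below `x` of minimal total degree
        set S : Set ℕ := {k : ℕ | ∃ y, y ∈ M ∧ y ≠ 0 ∧ y ≤ x ∧ (∑ i, y i) = k} with hS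
        have hne : S.Nonempty := ⟨∑ i, x i, x, hx, hx0, le_rfl, rfl⟩
        obtain ⟨m, hmM, hm0, hmx, hmsum⟩ := Nat.sInf_mem hne
        -- `m` is a minimal nonzero element, i.e. `m ∈ G`
        have hmG : m ∈ G := by
          refine ⟨hmM, hm0, fun y hyM hy0 hym => ?_⟩
          have hyx : y ≤ x := hym.trans hmx
          have h1 : sInf S ≤ ∑ i, y i := Nat.sInf_le ⟨y, hyM, hy0, hyx, rfl⟩
          have h2 : (∑ i, y i) ≤ ∑ i, m i :=
            Finset.sum_le_sum fun i _ => hym i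
          have hsum : (∑ i, y i) = ∑ i, m i := le_antisymm h2 (hmsum ▸ h1)
          funext i
          exact (Finset.sum_eq_sum_iff_of_le fun i _ => hym i).1 hsum i (Finset.mem_univ i)
        have hxmM : x - m ∈ M := hsub m hmM x hx hmx
        have hm_pos : 1 ≤ ∑ i, m i := by
          rcases Nat.eq_zero_or_pos (∑ i, m i) with h | h
          · exact absurd (funext fun i =>
              Finset.sum_eq_zero_iff.1 h i (Finset.mem_univ i)) hm0
          · exact h
        have hsum_sub : (∑ i, (x - m) i) + ∑ i, m i = ∑ i, x i := by
          rw [← Finset.sum_add_distrib]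
          exact Finset.sum_congr rfl fun i _ => Nat.sub_add_cancel (hmx i)
        have hle : (∑ i, (x - m) i) ≤ N := by omega
        have h1 : x - m ∈ AddSubmonoid.closure (hGfin.toFinset : Set (ι → ℕ)) :=
          ih (x - m) hxmM hle
        have h2 : m ∈ AddSubmonoid.closure (hGfin.toFinset : Set (ι → ℕ)) :=
          AddSubmonoid.subset_closure (by simpa using hmG)
        have : (x - m) + m = x := by
          funext i
          exact Nat.sub_add_cancel (hmx i)
        exact this ▸ AddSubmonoid.add_mem _ h1 h2
    exact key (∑ i, x i) x hx le_rfl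

/-- Membership in the lattice dual is equivalent to nonnegativity of the integer dot
products with the generators. -/
theorem mem_latticeDual_iff (n : ℕ) (t : Finset (Fin n → ℤ)) (u : Fin n → ℤ) :
    u ∈ latticeDual n (latticeCone n t) ↔ ∀ v ∈ t, 0 ≤ ∑ i, u i * v i := by
  have hinner : ∀ a b : Fin n → ℤ,
      ⟪latticeIncl n a, latticeIncl n b⟫ = ((∑ i, a i * b i : ℤ) : ℝ) := by
    intro a b
    rw [PiLp.inner_apply]
    push_cast
    simp [latticeIncl, RCLike.inner_apply]
    exact Finset.sum_congr rfl fun i _ => mul_comm _ _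
  have hmem : u ∈ latticeDual n (latticeCone n t) ↔
      latticeIncl n u ∈ ProperCone.innerDual (latticeCone n t) := Iff.rfl
  rw [hmem, ProperCone.mem_innerDual]
  constructor
  · intro hu v hv
    have hvmem : latticeIncl n v ∈ latticeCone n t := by
      classical
      refine ⟨fun w => if w = v then 1 else 0, fun w => by positivity, ?_⟩
      rw [Finset.sum_eq_single v]
      · simp
      · intro w _ hw; simp [hw]
      · intro h; exact absurd hv h
    have h0 := hu hvmem
    rw [hinner] at h0
    have : (0 : ℝ) ≤ ((∑ i, u i * v i : ℤ) : ℝ) := by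
      rw [show (∑ i, u i * v i) = ∑ i, v i * u i from Finset.sum_congr rfl
        fun i _ => mul_comm _ _]
      exact h0
    exact_mod_cast this
  · intro h x hx
    obtain ⟨c, hc, rfl⟩ := hx
    rw [sum_inner]
    refine Finset.sum_nonneg fun v hv => ?_
    rw [real_inner_smul_left]
    refine mul_nonneg (hc v) ?_
    have h0 : (0:ℝ) ≤ ((∑ i, v i * u i : ℤ) : ℝ) := by
      have := h v hv
      have heq : (∑ i, v i * u i) = ∑ i, u i * v i :=
        Finset.sum_congr rfl fun i _ => mul_comm _ _
      rw [heq]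
      exact_mod_cast this
    rw [hinner]
    exact h0

/-- **Gordan's lemma**: the lattice points of the dual of a rational polyhedral cone form a
finitely generated monoid. -/
theorem gordan (n : ℕ) (t : Finset (Fin n → ℤ)) :
    (latticeDual n (latticeCone n t)).FG := by
  classical
  -- index type for the auxiliary monoid in `ℕ^(2n + |t|)`
  -- the additive hom taking `(a, b, c)` to `a - b`
  let φ : ((Fin n ⊕ Fin n) ⊕ {v // v ∈ t} → ℕ) →+ (Fin n → ℤ) :=
    { toFun := fun f i => (f (Sum.inl (Sum.inl i)) : ℤ) - (f (Sum.inl (Sum.inr i)) : ℤ)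
      map_zero' := by funext i; simp
      map_add' := by intro f g; funext i; simp [Pi.add_apply]; ring }
  -- the auxiliary monoid
  let E : AddSubmonoid ((Fin n ⊕ Fin n) ⊕ {v // v ∈ t} → ℕ) :=
    { carrier := {f | ∀ v : {v // v ∈ t}, (∑ i, (φ f) i * (v : Fin n → ℤ) i)
        = (f (Sum.inr v) : ℤ)}
      zero_mem' := by
        intro v
        simp
      add_mem' := by
        intro f g hf hg v
        have : ∀ i, (φ (f + g)) i = (φ f) i + (φ g) i := by
          intro i
          rw [map_add]
          rfl
        simp only [this, add_mul, Finset.sum_add_distrib, hf v, hg v, Pi.add_apply]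
        push_cast
        ring }
  have hEsub : ∀ x ∈ E, ∀ y ∈ E, x ≤ y → y - x ∈ E := by
    intro x hx y hy hxy v
    have hφ : ∀ i, (φ (y - x)) i = (φ y) i - (φ x) i := by
      intro i
      simp only [φ, AddMonoidHom.coe_mk, ZeroHom.coe_mk]
      have h1 : ((y - x) (Sum.inl (Sum.inl i)) : ℤ)
          = (y (Sum.inl (Sum.inl i)) : ℤ) - (x (Sum.inl (Sum.inl i)) : ℤ) := by
        have hle : x (Sum.inl (Sum.inl i)) ≤ y (Sum.inl (Sum.inl i)) :=
          hxy (Sum.inl (Sum.inl i))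
        simp only [Pi.sub_apply]
        omega
      have h2 : ((y - x) (Sum.inl (Sum.inr i)) : ℤ)
          = (y (Sum.inl (Sum.inr i)) : ℤ) - (x (Sum.inl (Sum.inr i)) : ℤ) := by
        have hle : x (Sum.inl (Sum.inr i)) ≤ y (Sum.inl (Sum.inr i)) :=
          hxy (Sum.inl (Sum.inr i))
        simp only [Pi.sub_apply]
        omega
      rw [h1, h2]
      ring
    have hv : ((y - x) (Sum.inr v) : ℤ) = (y (Sum.inr v) : ℤ) - (x (Sum.inr v) : ℤ) := by
      have hle : x (Sum.inr v) ≤ y (Sum.inr v) := hxy (Sum.inr v)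
      simp only [Pi.sub_apply]
      omega
    simp only [hφ, sub_mul, Finset.sum_sub_distrib, hy v, hx v, hv]
  have hEfg : E.FG := fg_of_sub_closed E hEsub
  have himg : E.map φ = latticeDual n (latticeCone n t) := by
    ext u
    rw [mem_latticeDual_iff]
    constructor
    · rintro ⟨f, hf, rfl⟩ v hv
      have := hf ⟨v, hv⟩
      rw [this]
      exact Int.natCast_nonneg _
    · intro hu
      set f0 : (Fin n ⊕ Fin n) ⊕ {v // v ∈ t} → ℕ := fun j =>
        match j with
        | .inl (.inl i) => (u i).toNat
        | .inl (.inr i) => (-u i).toNat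
        | .inr v => (∑ i, u i * (v : Fin n → ℤ) i).toNat with hf0
      have hφu : φ f0 = u := by
        funext i
        simp only [φ, AddMonoidHom.coe_mk, ZeroHom.coe_mk, hf0]
        omega
      refine ⟨f0, ?_, hφu⟩
      intro v
      rw [hφu]
      show (∑ i, u i * (v : Fin n → ℤ) i)
        = ((∑ i, u i * (v : Fin n → ℤ) i).toNat : ℤ)
      rw [Int.toNat_of_nonneg (hu v v.2)]
  rw [← himg]
  exact hEfg.map φ
end

section
/- If τ is a face of a rational polyhedral cone σ cut out by u ∈ S_σ (that is, τ = σ ∩ u^⊥), then S_τ = S_σ + ℤ_{≥0}·(−u), i.e., the lattice points of τ^∨ are exactly sums of lattice points of σ^∨ and nonnegative integer multiples of −u. -/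
open RealInnerProductSpace

lemma latticeIncl_inner (n : ℕ) (a b : Fin n → ℤ) :
    inner ℝ (latticeIncl n a) (latticeIncl n b) = ((∑ i, a i * b i : ℤ) : ℝ) := by
  simp [latticeIncl, PiLp.inner_apply, mul_comm]

lemma gen_mem_latticeCone (n : ℕ) (t : Finset (Fin n → ℤ)) {v : Fin n → ℤ} (hv : v ∈ t) :
    latticeIncl n v ∈ latticeCone n t := by
  refine ⟨fun w => if w = v then 1 else 0, fun w => by positivity, ?_⟩
  rw [Finset.sum_eq_single v]
  · simp
  · intro b _ hb; simp [hb]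
  · intro h; exact absurd hv h

lemma latticeCone_dual_of_gens (n : ℕ) (t : Finset (Fin n → ℤ))
    (y : EuclideanSpace ℝ (Fin n)) (h : ∀ v ∈ t, (0:ℝ) ≤ inner ℝ (latticeIncl n v) y)
    {x : EuclideanSpace ℝ (Fin n)} (hx : x ∈ latticeCone n t) : (0 : ℝ) ≤ inner ℝ x y := by
  obtain ⟨c, hc, rfl⟩ := hx
  rw [sum_inner]
  apply Finset.sum_nonneg
  intro v hv
  rw [real_inner_smul_left]
  exact mul_nonneg (hc v) (h v hv)

/-- If `τ = σ ∩ u^⊥` is the face of the rational polyhedral cone `σ` cut out by a lattice point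
`u` of the dual cone, then `S_τ = S_σ + ℤ_{≥0}·(−u)`. -/
theorem latticeDual_face (n : ℕ) (σ : Set (EuclideanSpace ℝ (Fin n)))
    (hσ : ∃ t : Finset (Fin n → ℤ), σ = latticeCone n t)
    (u : Fin n → ℤ) (hu : u ∈ latticeDual n σ) :
    ∀ w : Fin n → ℤ,
      w ∈ latticeDual n (σ ∩ {v | inner ℝ (latticeIncl n u) v = (0 : ℝ)}) ↔
        ∃ s ∈ latticeDual n σ, ∃ k : ℕ, w = s + k • (-u) := by
  obtain ⟨t, rfl⟩ := hσ
  intro w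
  constructor
  · intro hw
    have hw' : ∀ x ∈ latticeCone n t ∩ {v | inner ℝ (latticeIncl n u) v = (0 : ℝ)},
        (0 : ℝ) ≤ inner ℝ x (latticeIncl n w) := by
      intro x hx
      exact (ProperCone.mem_innerDual (y := latticeIncl n w)).mp hw hx
    set k : ℕ := ∑ v ∈ t, (∑ i, v i * w i).natAbs with hk
    refine ⟨w + k • u, ?_, k, ?_⟩
    · -- membership in latticeDual of σ
      show latticeIncl n (w + k • u) ∈ (ProperCone.innerDual (latticeCone n t) : Set (EuclideanSpace ℝ (Fin n)))
      rw [SetLike.mem_coe, ProperCone.mem_innerDual]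
      intro x hx
      refine latticeCone_dual_of_gens n t _ ?_ hx
      intro v hv
      rw [latticeIncl_inner]
      have key : ∑ i, v i * (w + k • u) i = (∑ i, v i * w i) + (k : ℤ) * ∑ i, v i * u i := by
        rw [Finset.mul_sum, ← Finset.sum_add_distrib]
        congr 1; funext i
        simp [Pi.add_apply, Pi.smul_apply]
        ring
      rw [key]
      have hvu : (0 : ℤ) ≤ ∑ i, v i * u i := by
        have := (ProperCone.mem_innerDual (y := latticeIncl n u)).mp hu (gen_mem_latticeCone n t hv)
        rw [latticeIncl_inner] at this
        exact_mod_cast this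
      rcases eq_or_lt_of_le hvu with h0 | h1
      · -- v ∈ τ
        have hτ : latticeIncl n v ∈ latticeCone n t ∩ {x | inner ℝ (latticeIncl n u) x = (0 : ℝ)} := by
          refine ⟨gen_mem_latticeCone n t hv, ?_⟩
          show inner ℝ (latticeIncl n u) (latticeIncl n v) = (0 : ℝ)
          rw [latticeIncl_inner]
          have : ∑ i, u i * v i = ∑ i, v i * u i := by
            congr 1; funext i; ring
          rw [this, ← h0]; norm_num
        have := hw' _ hτ
        rw [latticeIncl_inner] at this
        have h2 : (0 : ℤ) ≤ ∑ i, v i * w i := by exact_mod_cast this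
        have : (0 : ℤ) ≤ (∑ i, v i * w i) + (k : ℤ) * ∑ i, v i * u i := by
          rw [← h0]; linarith
        exact_mod_cast this
      · -- 1 ≤ ⟨v,u⟩
        have h1' : (1 : ℤ) ≤ ∑ i, v i * u i := h1
        have hkb : ((∑ i, v i * w i).natAbs : ℤ) ≤ (k : ℤ) := by
          have := Finset.single_le_sum (f := fun v => (∑ i, v i * w i).natAbs)
            (fun v _ => Nat.zero_le _) hv
          exact_mod_cast this
        have habs : -(∑ i, v i * w i) ≤ ((∑ i, v i * w i).natAbs : ℤ) :=
          neg_le_of_neg_le (by rw [← Int.abs_eq_natAbs]; exact neg_abs_le _)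
        have : (0 : ℤ) ≤ (∑ i, v i * w i) + (k : ℤ) * ∑ i, v i * u i := by
          have : (k : ℤ) * 1 ≤ (k : ℤ) * ∑ i, v i * u i :=
            mul_le_mul_of_nonneg_left h1' (by positivity)
          linarith
        exact_mod_cast this
    · funext i
      simp only [Pi.add_apply, Pi.smul_apply, Pi.neg_apply, smul_eq_mul, smul_neg]
      ring
  · rintro ⟨s, hs, k, rfl⟩
    show latticeIncl n (s + k • (-u)) ∈
      (ProperCone.innerDual (latticeCone n t ∩ {v | inner ℝ (latticeIncl n u) v = (0 : ℝ)}) : Set (EuclideanSpace ℝ (Fin n)))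
    rw [SetLike.mem_coe, ProperCone.mem_innerDual]
    rintro x ⟨hxσ, hxu⟩
    have heq : latticeIncl n (s + k • (-u)) = latticeIncl n s - (k : ℝ) • latticeIncl n u := by
      ext i
      simp only [latticeIncl, Pi.add_apply, Pi.smul_apply, Pi.neg_apply, PiLp.sub_apply,
        PiLp.smul_apply, smul_eq_mul, PiLp.toLp_apply]
      push_cast [nsmul_eq_mul]
      ring
    rw [heq, inner_sub_right, real_inner_smul_right]
    have h0 : inner ℝ x (latticeIncl n u) = (0 : ℝ) := by
      rw [real_inner_comm]; exact hxu
    rw [h0]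
    have := (ProperCone.mem_innerDual (y := latticeIncl n s)).mp hs hxσ
    linarith
end

section
/- Let K be a field with a complete non-Archimedean absolute value, S a submonoid of ℤ^n, and let K⟨S⟩ = { ∑_{u∈S} a_u χ^u : a_u ∈ K, a_u → 0 } be the completion of the monoid algebra K[S] under the Gauss norm |∑ a_u χ^u| = max_u |a_u|. Then the Gauss norm is multiplicative: |fg| = |f|·|g| for all f, g ∈ K⟨S⟩; in particular K⟨S⟩ is an integral domain. -/
open Filter

/-- The coefficients of the convolution product of two coefficient families indexed by a
submonoid `S` of `ℤ^n` (the product `fg` in `K⟨S⟩`, where `f = ∑ f_u χ^u`). -/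
noncomputable def convCoeff {n : ℕ} {K : Type*} [NormedField K] {S : AddSubmonoid (Fin n → ℤ)}
    (f g : ↥S → K) (u : ↥S) : K :=
  ∑' p : {p : ↥S × ↥S // p.1 + p.2 = u}, f p.1.1 * g p.1.2

/-- The Gauss norm `|f| = sup_u |a_u|` of an element `f = ∑ a_u χ^u` of `K⟨S⟩`. -/
noncomputable def gaussNorm {n : ℕ} {K : Type*} [NormedField K] {S : AddSubmonoid (Fin n → ℤ)}
    (f : ↥S → K) : ℝ :=
  ⨆ u : ↥S, ‖f u‖

section Aux

variable {n : ℕ} {K : Type*} [NormedField K] {S : AddSubmonoid (Fin n → ℤ)}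

lemma gaussNorm_nonneg (f : ↥S → K) : 0 ≤ gaussNorm f :=
  Real.iSup_nonneg fun _ => norm_nonneg _

lemma aux_finite {ι : Type*} {h : ι → K} (hh : Tendsto h cofinite (nhds 0)) {ε : ℝ}
    (hε : 0 < ε) : {i | ε ≤ ‖h i‖}.Finite := by
  have := eventually_cofinite.mp (NormedAddCommGroup.tendsto_nhds_zero.mp hh ε hε)
  exact this.subset fun i hi => by
    simp only [Set.mem_setOf_eq, not_lt]
    exact hi

/-- Strict bound on a sup of norms of a family tending to zero. -/
lemma aux_iSup_lt {ι : Type*} {h : ι → K} (hh : Tendsto h cofinite (nhds 0)) {C : ℝ}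
    (hC : 0 < C) (hlt : ∀ i, ‖h i‖ < C) : (⨆ i, ‖h i‖) < C := by
  cases isEmpty_or_nonempty ι with
  | inl hempty => rw [Real.iSup_of_isEmpty]; exact hC
  | inr hne =>
    have hBfin : {i | C / 2 ≤ ‖h i‖}.Finite := aux_finite hh (half_pos hC)
    rcases Set.eq_empty_or_nonempty {i | C / 2 ≤ ‖h i‖} with hB | hB
    · refine lt_of_le_of_lt (ciSup_le fun i => ?_) (half_lt_self hC)
      by_contra hcon
      exact (Set.eq_empty_iff_forall_notMem.mp hB i) (le_of_not_ge hcon)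
    · obtain ⟨i₁, hi₁, hmax⟩ := Set.Finite.exists_maximalFor (fun i => ‖h i‖) _ hBfin hB
      have hub : ∀ i, ‖h i‖ ≤ ‖h i₁‖ := by
        intro i
        by_cases hiB : i ∈ {i | C / 2 ≤ ‖h i‖}
        · by_contra hcon
          have hle : ‖h i₁‖ ≤ ‖h i‖ := le_of_not_ge hcon
          exact hcon ((hmax hiB hle).ge)
        · exact le_trans (not_le.mp hiB).le hi₁
      exact lt_of_le_of_lt (ciSup_le hub) (hlt i₁)

lemma aux_bddAbove {f : ↥S → K} (hf : Tendsto f cofinite (nhds 0)) :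
    BddAbove (Set.range fun u => ‖f u‖) :=
  (hf.norm).bddAbove_range_of_cofinite

lemma le_gaussNorm {f : ↥S → K} (hf : Tendsto f cofinite (nhds 0)) (u : ↥S) :
    ‖f u‖ ≤ gaussNorm f :=
  le_ciSup (aux_bddAbove hf) u

/-- The Gauss norm is attained, and we can choose an attaining index which is maximal
with respect to the lexicographic order on `ℤ^n`. -/
lemma exists_max_attain {f : ↥S → K} (hf : Tendsto f cofinite (nhds 0)) (hf0 : f ≠ 0) :
    ∃ u₀ : ↥S, ‖f u₀‖ = gaussNorm f ∧ ∀ u : ↥S, u ≠ u₀ → ‖f u‖ = gaussNorm f →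
      toLex (u : Fin n → ℤ) < toLex (u₀ : Fin n → ℤ) := by
  obtain ⟨u₁, hu₁⟩ := Function.ne_iff.mp hf0
  have hpos : 0 < gaussNorm f :=
    lt_of_lt_of_le (norm_pos_iff.mpr hu₁) (le_gaussNorm hf u₁)
  set C := gaussNorm f with hCdef
  haveI : Nonempty ↥S := ⟨u₁⟩
  -- The set of indices with large norm is finite and nonempty.
  have hT'fin : {u | C / 2 ≤ ‖f u‖}.Finite := aux_finite hf (half_pos hpos)
  have hT'ne : {u | C / 2 ≤ ‖f u‖}.Nonempty := by
    obtain ⟨u, hu⟩ := exists_lt_of_lt_ciSup (f := fun u : ↥S => ‖f u‖) (half_lt_self hpos)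
    exact ⟨u, hu.le⟩
  -- The sup is attained.
  obtain ⟨u₂, hu₂, hmax₂⟩ := Set.Finite.exists_maximalFor (fun u => ‖f u‖) _ hT'fin hT'ne
  have hub : ∀ u, ‖f u‖ ≤ ‖f u₂‖ := by
    intro u
    by_cases huB : u ∈ {u | C / 2 ≤ ‖f u‖}
    · by_contra hcon
      exact hcon ((hmax₂ huB (le_of_not_ge hcon)).ge)
    · exact le_trans (le_of_not_ge huB) hu₂
  have hatt : ‖f u₂‖ = C := le_antisymm (le_gaussNorm hf u₂) (ciSup_le hub)
  -- Now maximize lexicographically over the attaining set.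
  have hTfin : {u | ‖f u‖ = C}.Finite :=
    hT'fin.subset fun u hu => by
      simp only [Set.mem_setOf_eq] at hu ⊢
      rw [hu]; linarith
  obtain ⟨u₀, hu₀, hmax₀⟩ :=
    Set.Finite.exists_maximalFor (fun u : ↥S => toLex (u : Fin n → ℤ)) _ hTfin ⟨u₂, hatt⟩
  refine ⟨u₀, hu₀, fun u hne hu => ?_⟩
  have htri : ∀ x y : Lex (Fin n → ℤ), x < y ∨ x = y ∨ y < x := fun x y =>
    lt_trichotomy x y
  rcases htri (toLex (u : Fin n → ℤ)) (toLex (u₀ : Fin n → ℤ)) with hlt | heq | hgt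
  · exact hlt
  · exact absurd (Subtype.coe_injective (toLex.injective heq)) hne
  · exact absurd
      (Subtype.coe_injective (toLex.injective (le_antisymm hgt.le (hmax₀ hu (le_of_lt hgt))))).symm hne

lemma conv_tendsto [CompleteSpace K] {f g : ↥S → K}
    (hf : Tendsto f cofinite (nhds 0)) (hg : Tendsto g cofinite (nhds 0)) (u : ↥S) :
    Tendsto (fun p : {p : ↥S × ↥S // p.1 + p.2 = u} => f p.1.1 * g p.1.2)
      cofinite (nhds 0) := by
  rw [NormedAddCommGroup.tendsto_nhds_zero]
  intro ε hε
  rw [eventually_cofinite]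
  have hCf : (0:ℝ) ≤ gaussNorm f := gaussNorm_nonneg f
  have hCg : (0:ℝ) ≤ gaussNorm g := gaussNorm_nonneg g
  have hA : {v : ↥S | ε / (gaussNorm g + 1) ≤ ‖f v‖}.Finite :=
    aux_finite hf (div_pos hε (by linarith))
  have hB : {v : ↥S | ε / (gaussNorm f + 1) ≤ ‖g v‖}.Finite :=
    aux_finite hg (div_pos hε (by linarith))
  have hinj : Function.Injective
      (fun p : {p : ↥S × ↥S // p.1 + p.2 = u} => (p.1.1, p.1.2)) := by
    intro p q hpq
    simp only [Prod.mk.injEq] at hpq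
    exact Subtype.ext (Prod.ext hpq.1 hpq.2)
  refine ((hA.prod hB).preimage (hinj.injOn)).subset fun p hp => ?_
  simp only [Set.mem_setOf_eq, not_lt, norm_mul] at hp
  constructor
  · show ε / (gaussNorm g + 1) ≤ ‖f p.1.1‖
    rw [div_le_iff₀ (by linarith)]
    calc ε ≤ ‖f p.1.1‖ * ‖g p.1.2‖ := hp
      _ ≤ ‖f p.1.1‖ * (gaussNorm g + 1) :=
        mul_le_mul_of_nonneg_left (le_trans (le_gaussNorm hg _) (by linarith)) (norm_nonneg _)
  · show ε / (gaussNorm f + 1) ≤ ‖g p.1.2‖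
    rw [div_le_iff₀ (by linarith)]
    calc ε ≤ ‖f p.1.1‖ * ‖g p.1.2‖ := hp
      _ = ‖g p.1.2‖ * ‖f p.1.1‖ := mul_comm _ _
      _ ≤ ‖g p.1.2‖ * (gaussNorm f + 1) :=
        mul_le_mul_of_nonneg_left (le_trans (le_gaussNorm hf _) (by linarith)) (norm_nonneg _)

lemma conv_summable [CompleteSpace K] [IsUltrametricDist K] {f g : ↥S → K}
    (hf : Tendsto f cofinite (nhds 0)) (hg : Tendsto g cofinite (nhds 0)) (u : ↥S) :
    Summable (fun p : {p : ↥S × ↥S // p.1 + p.2 = u} => f p.1.1 * g p.1.2) :=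
  NonarchimedeanAddGroup.summable_of_tendsto_cofinite_zero (conv_tendsto hf hg u)

lemma conv_norm_le [CompleteSpace K] [IsUltrametricDist K] {f g : ↥S → K}
    (hf : Tendsto f cofinite (nhds 0)) (hg : Tendsto g cofinite (nhds 0)) (u : ↥S) :
    ‖convCoeff f g u‖ ≤ gaussNorm f * gaussNorm g := by
  refine IsUltrametricDist.norm_tsum_le_of_forall_le_of_nonneg
    (mul_nonneg (gaussNorm_nonneg f) (gaussNorm_nonneg g)) fun p => ?_
  rw [norm_mul]
  exact mul_le_mul (le_gaussNorm hf _) (le_gaussNorm hg _) (norm_nonneg _) (gaussNorm_nonneg f)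

end Aux

/-- For a complete non-Archimedean field `K` and a submonoid `S ⊆ ℤ^n`, the Gauss norm on
`K⟨S⟩ = {∑ a_u χ^u : a_u → 0}` is multiplicative; in particular `K⟨S⟩` is an integral
domain. -/
theorem gaussNorm_mul {n : ℕ} {K : Type*} [NormedField K] [CompleteSpace K]
    (hna : ∀ a b : K, ‖a + b‖ ≤ max ‖a‖ ‖b‖)
    (S : AddSubmonoid (Fin n → ℤ)) (f g : ↥S → K)
    (hf : Tendsto f cofinite (nhds 0)) (hg : Tendsto g cofinite (nhds 0)) :
    gaussNorm (convCoeff f g) = gaussNorm f * gaussNorm g ∧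
      (f ≠ 0 → g ≠ 0 → convCoeff f g ≠ 0) := by
  classical
  haveI : IsUltrametricDist K :=
    IsUltrametricDist.isUltrametricDist_of_forall_norm_add_le_max_norm hna
  haveI : Nonempty ↥S := ⟨0⟩
  by_cases hf0 : f = 0
  · subst hf0
    have hconv : convCoeff (0 : ↥S → K) g = 0 := by
      funext u
      simp [convCoeff]
    have h0 : gaussNorm (0 : ↥S → K) = 0 := by
      simp [gaussNorm, ciSup_const]
    rw [hconv, h0]
    exact ⟨by ring, fun hne _ => absurd rfl hne⟩
  by_cases hg0 : g = 0
  · subst hg0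
    have hconv : convCoeff f (0 : ↥S → K) = 0 := by
      funext u
      simp [convCoeff]
    have h0 : gaussNorm (0 : ↥S → K) = 0 := by
      simp [gaussNorm, ciSup_const]
    rw [hconv, h0]
    exact ⟨by ring, fun _ hne => absurd rfl hne⟩
  -- Main case: both nonzero.
  obtain ⟨u₁, hu₁⟩ := Function.ne_iff.mp hf0
  obtain ⟨v₁, hv₁⟩ := Function.ne_iff.mp hg0
  have hCf : 0 < gaussNorm f :=
    lt_of_lt_of_le (norm_pos_iff.mpr hu₁) (le_gaussNorm hf u₁)
  have hCg : 0 < gaussNorm g :=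
    lt_of_lt_of_le (norm_pos_iff.mpr hv₁) (le_gaussNorm hg v₁)
  obtain ⟨u₀, hu₀, hu₀max⟩ := exists_max_attain hf hf0
  obtain ⟨v₀, hv₀, hv₀max⟩ := exists_max_attain hg hg0
  set w : ↥S := u₀ + v₀ with hwdef
  set p₀ : {p : ↥S × ↥S // p.1 + p.2 = w} := ⟨(u₀, v₀), rfl⟩ with hp₀def
  -- Every non-principal term is strictly smaller.
  have hterm : ∀ p : {p : ↥S × ↥S // p.1 + p.2 = w}, p ≠ p₀ →
      ‖f p.1.1 * g p.1.2‖ < gaussNorm f * gaussNorm g := by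
    rintro ⟨⟨u, v⟩, huv⟩ hne
    have hc : (↑u + ↑v : Fin n → ℤ) = ↑u₀ + ↑v₀ := by
      exact_mod_cast congrArg Subtype.val huv
    have hsmall : ‖f u‖ < gaussNorm f ∨ ‖g v‖ < gaussNorm g := by
      by_cases huu : u = u₀
      · exfalso
        apply hne
        apply Subtype.ext
        show ((u, v) : ↥S × ↥S) = (u₀, v₀)
        rw [huu] at hc ⊢
        have hv : (v : Fin n → ℤ) = v₀ := add_left_cancel hc
        rw [Subtype.coe_injective hv]
      · have hlex : toLex (u : Fin n → ℤ) ≠ toLex (u₀ : Fin n → ℤ) :=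
          fun h => huu (Subtype.coe_injective (toLex.injective h))
        have hcl : toLex (u : Fin n → ℤ) + toLex (v : Fin n → ℤ)
            = toLex (u₀ : Fin n → ℤ) + toLex (v₀ : Fin n → ℤ) := by
          rw [← toLex_add, ← toLex_add, hc]
        have htri : ∀ x y : Lex (Fin n → ℤ), x < y ∨ x = y ∨ y < x := fun x y =>
          lt_trichotomy x y
        rcases htri (toLex (u : Fin n → ℤ)) (toLex (u₀ : Fin n → ℤ)) with hlt | heq | hgt
        · right
          have hvgt : toLex (v₀ : Fin n → ℤ) < toLex (v : Fin n → ℤ) := by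
            have h2 : toLex (u₀ : Fin n → ℤ) + toLex (v₀ : Fin n → ℤ)
                < toLex (u₀ : Fin n → ℤ) + toLex (v : Fin n → ℤ) := by
              rw [← hcl]
              exact add_lt_add_left hlt _
            exact lt_of_add_lt_add_left h2
          have hvne : v ≠ v₀ := by
            intro h
            rw [h] at hvgt
            exact lt_irrefl _ hvgt
          have : ‖g v‖ ≠ gaussNorm g :=
            fun h => absurd (hv₀max v hvne h) (asymm hvgt)
          exact lt_of_le_of_ne (le_gaussNorm hg v) this
        · exact absurd heq hlex
        · left
          have : ‖f u‖ ≠ gaussNorm f :=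
            fun h => absurd (hu₀max u huu h) (asymm hgt)
          exact lt_of_le_of_ne (le_gaussNorm hf u) this
    rw [norm_mul]
    rcases hsmall with h | h
    · calc ‖f u‖ * ‖g v‖ ≤ ‖f u‖ * gaussNorm g :=
            mul_le_mul_of_nonneg_left (le_gaussNorm hg v) (norm_nonneg _)
        _ < gaussNorm f * gaussNorm g := mul_lt_mul_of_pos_right h hCg
    · calc ‖f u‖ * ‖g v‖ ≤ gaussNorm f * ‖g v‖ :=
            mul_le_mul_of_nonneg_right (le_gaussNorm hf u) (norm_nonneg _)
        _ < gaussNorm f * gaussNorm g := mul_lt_mul_of_pos_left h hCf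
  -- The key computation: the coefficient at `w` has norm exactly `|f| * |g|`.
  have hsum := conv_summable hf hg w
  have hsplit := hsum.tsum_eq_add_tsum_ite p₀
  have hRest : ‖∑' p : {p : ↥S × ↥S // p.1 + p.2 = w},
      if p = p₀ then 0 else f p.1.1 * g p.1.2‖ < gaussNorm f * gaussNorm g := by
    refine lt_of_le_of_lt (IsUltrametricDist.norm_tsum_le _) ?_
    refine aux_iSup_lt
      (h := fun p : {p : ↥S × ↥S // p.1 + p.2 = w} => if p = p₀ then 0 else f p.1.1 * g p.1.2)
      ?_ (mul_pos hCf hCg) ?_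
    · refine Tendsto.congr' ?_ (conv_tendsto hf hg w)
      rw [eventuallyEq_iff_exists_mem]
      refine ⟨{p₀}ᶜ, ?_, fun p hp => ?_⟩
      · rw [mem_cofinite, compl_compl]
        exact Set.finite_singleton _
      · simp only [Set.mem_compl_iff, Set.mem_singleton_iff] at hp
        simp [hp]
    · intro p
      by_cases hp : p = p₀
      · have h0 : (fun p : {p : ↥S × ↥S // p.1 + p.2 = w} =>
            if p = p₀ then 0 else f p.1.1 * g p.1.2) p = 0 := by
          rw [hp]; simp
        rw [show (if p = p₀ then (0:K) else f p.1.1 * g p.1.2) = 0 from h0, norm_zero]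
        exact mul_pos hCf hCg
      · simpa [hp] using hterm p hp
  have hkey : ‖convCoeff f g w‖ = gaussNorm f * gaussNorm g := by
    have hmain : ‖f u₀ * g v₀‖ = gaussNorm f * gaussNorm g := by
      rw [norm_mul, hu₀, hv₀]
    have hne : ‖f u₀ * g v₀‖ ≠ ‖∑' p : {p : ↥S × ↥S // p.1 + p.2 = w},
        if p = p₀ then 0 else f p.1.1 * g p.1.2‖ := by
      rw [hmain]; exact ne_of_gt hRest
    calc ‖convCoeff f g w‖
        = ‖f u₀ * g v₀ + ∑' p : {p : ↥S × ↥S // p.1 + p.2 = w},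
            if p = p₀ then 0 else f p.1.1 * g p.1.2‖ := by
          rw [convCoeff, hsplit]
      _ = max ‖f u₀ * g v₀‖ ‖∑' p : {p : ↥S × ↥S // p.1 + p.2 = w},
            if p = p₀ then 0 else f p.1.1 * g p.1.2‖ :=
          IsUltrametricDist.norm_add_eq_max_of_norm_ne_norm hne
      _ = gaussNorm f * gaussNorm g := by
          rw [hmain]
          exact max_eq_left (le_of_lt (hmain ▸ hRest))
  have hbdd : BddAbove (Set.range fun u => ‖convCoeff f g u‖) := by
    refine ⟨gaussNorm f * gaussNorm g, ?_⟩
    rintro x ⟨u, rfl⟩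
    exact conv_norm_le hf hg u
  constructor
  · refine le_antisymm (ciSup_le fun u => conv_norm_le hf hg u) ?_
    calc gaussNorm f * gaussNorm g = ‖convCoeff f g w‖ := hkey.symm
      _ ≤ gaussNorm (convCoeff f g) := le_ciSup hbdd w
  · intro _ _ hzero
    rw [hzero] at hkey
    simp only [Pi.zero_apply, norm_zero] at hkey
    exact absurd hkey.symm (ne_of_gt (mul_pos hCf hCg))
end

section
/- Let K be a non-Archimedean valued field and S a submonoid of ℤ^n. For nonzero f, g in the monoid algebra K[S], define u_f to be the lexicographically smallest u with |c_{f,u}| maximal among the coefficients of f. Then u_{fg} = u_f + u_g and the coefficient of χ^{u_f + u_g} in fg has absolute value |c_{f,u_f}|·|c_{g,u_g}|. -/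
/-- `u` is the leading index of `h`: the smallest index (for the given order `L`) whose
coefficient has maximal absolute value. -/
def IsLeadIdx {n : ℕ} {K : Type*} [NormedField K] {S : AddSubmonoid (Fin n → ℤ)}
    (L : LinearOrder ↥S) (h : AddMonoidAlgebra K ↥S) (u : ↥S) : Prop :=
  u ∈ h.coeff.support ∧ (∀ v : ↥S, ‖h.coeff v‖ ≤ ‖h.coeff u‖) ∧ ∀ v : ↥S, ‖h.coeff v‖ = ‖h.coeff u‖ → L.le u v

private lemma na_sum_le {K : Type*} [NormedField K]
    (hna : ∀ a b : K, ‖a + b‖ ≤ max ‖a‖ ‖b‖) {ι : Type*} (t : Finset ι) (F : ι → K)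
    {B : ℝ} (hB : 0 ≤ B) (h : ∀ i ∈ t, ‖F i‖ ≤ B) : ‖∑ i ∈ t, F i‖ ≤ B := by
  classical
  induction t using Finset.induction_on with
  | empty => simpa using hB
  | insert _ _ hx ih =>
    rw [Finset.sum_insert hx]
    exact le_trans (hna _ _) (max_le (h _ (Finset.mem_insert_self _ _))
      (ih fun i hi => h i (Finset.mem_insert_of_mem hi)))

private lemma na_sum_lt {K : Type*} [NormedField K]
    (hna : ∀ a b : K, ‖a + b‖ ≤ max ‖a‖ ‖b‖) {ι : Type*} (t : Finset ι) (F : ι → K)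
    {B : ℝ} (hB : 0 < B) (h : ∀ i ∈ t, ‖F i‖ < B) : ‖∑ i ∈ t, F i‖ < B := by
  classical
  induction t using Finset.induction_on with
  | empty => simpa using hB
  | insert _ _ hx ih =>
    rw [Finset.sum_insert hx]
    exact lt_of_le_of_lt (hna _ _) (max_lt (h _ (Finset.mem_insert_self _ _))
      (ih fun i hi => h i (Finset.mem_insert_of_mem hi)))

private lemma na_add_eq_left {K : Type*} [NormedField K]
    (hna : ∀ a b : K, ‖a + b‖ ≤ max ‖a‖ ‖b‖) {a b : K} (h : ‖b‖ < ‖a‖) :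
    ‖a + b‖ = ‖a‖ := by
  refine le_antisymm (le_trans (hna a b) (max_le le_rfl h.le)) ?_
  have h2 : ‖a‖ ≤ max ‖a + b‖ ‖b‖ := by
    have := hna (a + b) (-b)
    simpa using this
  rcases le_max_iff.mp h2 with h3 | h3
  · exact h3
  · exact absurd h3 (not_le.mpr h)

private lemma na_sum_dominant {K : Type*} [NormedField K]
    (hna : ∀ a b : K, ‖a + b‖ ≤ max ‖a‖ ‖b‖) {ι : Type*} (t : Finset ι) (F : ι → K)
    {i0 : ι} (hi0 : i0 ∈ t) (hpos : 0 < ‖F i0‖)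
    (h : ∀ i ∈ t, i ≠ i0 → ‖F i‖ < ‖F i0‖) : ‖∑ i ∈ t, F i‖ = ‖F i0‖ := by
  classical
  rw [← Finset.add_sum_erase t F hi0]
  exact na_add_eq_left hna (na_sum_lt hna _ _ hpos fun i hi =>
    h i (Finset.mem_of_mem_erase hi) (Finset.ne_of_mem_erase hi))

private lemma ord_addle {α : Type*} [AddCommMonoid α] (L : LinearOrder α)
    (hL : ∀ u v w : α, L.lt u v → L.lt (u + w) (v + w)) :
    ∀ u v a b : α, L.le u a → L.le v b → L.le (u + v) (a + b) := by
  letI := L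
  have step : ∀ u v w : α, u ≤ v → u + w ≤ v + w := by
    intro u v w h
    rcases h.lt_or_eq with h | rfl
    · exact (hL _ _ _ h).le
    · exact le_rfl
  intro u v a b h1 h2
  refine le_trans (step u a v h1) ?_
  rw [add_comm a v, add_comm a b]
  exact step v b a h2

private lemma ord_addlt {α : Type*} [AddCommMonoid α] (L : LinearOrder α)
    (hL : ∀ u v w : α, L.lt u v → L.lt (u + w) (v + w)) :
    ∀ u v a b : α, L.le u a → L.le v b → (a, b) ≠ (u, v) → L.lt (u + v) (a + b) := by
  letI := L
  have step : ∀ u v w : α, u ≤ v → u + w ≤ v + w := by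
    intro u v w h
    rcases h.lt_or_eq with h | rfl
    · exact (hL _ _ _ h).le
    · exact le_rfl
  intro u v a b h1 h2 hne
  rcases h1.lt_or_eq with h1 | rfl
  · refine lt_of_lt_of_le (hL _ _ _ h1) ?_
    rw [add_comm a v, add_comm a b]
    exact step v b a h2
  · have hvb : v ≠ b := by
      intro h; exact hne (by rw [h])
    have h2' := lt_of_le_of_ne h2 hvb
    have := hL v b u h2'
    rwa [add_comm v u, add_comm b u] at this
  
private lemma ord_lt_of_not_le {α : Type*} (L : LinearOrder α) {a b : α}
    (h : ¬ L.le a b) : L.lt b a := by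
  letI := L
  exact lt_of_not_ge h

private lemma ord_asymm {α : Type*} (L : LinearOrder α) {a b : α}
    (h1 : L.lt a b) (h2 : L.le b a) : False := by
  letI := L
  exact absurd h2 (not_le_of_gt h1)

private lemma ord_irrefl {α : Type*} (L : LinearOrder α) {a : α}
    (h : L.lt a a) : False := by
  letI := L
  exact lt_irrefl a h

/-- For nonzero `f, g` in the monoid algebra `K[S]` over a non-Archimedean field, with leading
indices `u_f`, `u_g` (smallest indices with maximal coefficient absolute value), we have
`u_{fg} = u_f + u_g` and `|c_{fg, u_f+u_g}| = |c_{f,u_f}|·|c_{g,u_g}|`. -/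
theorem leadIdx_mul {n : ℕ} {K : Type*} [NormedField K]
    (hna : ∀ a b : K, ‖a + b‖ ≤ max ‖a‖ ‖b‖)
    (S : AddSubmonoid (Fin n → ℤ)) (L : LinearOrder ↥S)
    (hL : ∀ u v w : ↥S, L.lt u v → L.lt (u + w) (v + w))
    (f g : AddMonoidAlgebra K ↥S) (hf : f ≠ 0) (hg : g ≠ 0)
    (uf ug : ↥S) (huf : IsLeadIdx L f uf) (hug : IsLeadIdx L g ug) :
    ‖(f * g).coeff (uf + ug)‖ = ‖f.coeff uf‖ * ‖g.coeff ug‖ ∧ IsLeadIdx L (f * g) (uf + ug) := by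
  classical
  have hfu : f.coeff uf ≠ 0 := Finsupp.mem_support_iff.mp huf.1
  have hgu : g.coeff ug ≠ 0 := Finsupp.mem_support_iff.mp hug.1
  have hMf : 0 < ‖f.coeff uf‖ := norm_pos_iff.mpr hfu
  have hMg : 0 < ‖g.coeff ug‖ := norm_pos_iff.mpr hgu
  set M : ℝ := ‖f.coeff uf‖ * ‖g.coeff ug‖ with hM
  have hMpos : 0 < M := mul_pos hMf hMg
  have key : ∀ a b : ↥S, ‖f.coeff a * g.coeff b‖ ≤ M := by
    intro a b
    rw [norm_mul]
    exact mul_le_mul (huf.2.1 a) (hug.2.1 b) (norm_nonneg _) (norm_nonneg _)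
  have key2 : ∀ a b : ↥S, ‖f.coeff a * g.coeff b‖ = M → L.le uf a ∧ L.le ug b := by
    intro a b hab
    rw [norm_mul] at hab
    have ha : ‖f.coeff a‖ ≤ ‖f.coeff uf‖ := huf.2.1 a
    have hb : ‖g.coeff b‖ ≤ ‖g.coeff ug‖ := hug.2.1 b
    have ha0 : 0 ≤ ‖f.coeff a‖ := norm_nonneg _
    have hb0 : 0 ≤ ‖g.coeff b‖ := norm_nonneg _
    have hea : ‖f.coeff a‖ = ‖f.coeff uf‖ := by nlinarith
    have heb : ‖g.coeff b‖ = ‖g.coeff ug‖ := by nlinarith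
    exact ⟨huf.2.2 a hea, hug.2.2 b heb⟩
  have hmul : ∀ w : ↥S, (f * g).coeff w =
      ∑ p ∈ f.coeff.support ×ˢ g.coeff.support, if p.1 + p.2 = w then f.coeff p.1 * g.coeff p.2 else 0 := by
    intro w
    rw [AddMonoidAlgebra.coeff_mul]
    simp only [Finsupp.sum]
    rw [Finset.sum_product]
  have bound : ∀ w : ↥S, ‖(f * g).coeff w‖ ≤ M := by
    intro w
    rw [hmul w]
    refine na_sum_le hna _ _ hMpos.le ?_
    intro p _
    by_cases h : p.1 + p.2 = w
    · rw [if_pos h]; exact key _ _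
    · rw [if_neg h]; simpa using hMpos.le
  have main : ‖(f * g).coeff (uf + ug)‖ = M := by
    rw [hmul (uf + ug)]
    have hmem : (uf, ug) ∈ f.coeff.support ×ˢ g.coeff.support :=
      Finset.mem_product.mpr ⟨huf.1, hug.1⟩
    have hnorm0 : ‖(fun p : ↥S × ↥S => if p.1 + p.2 = uf + ug then f.coeff p.1 * g.coeff p.2 else 0)
        (uf, ug)‖ = M := by
      show ‖if uf + ug = uf + ug then f.coeff uf * g.coeff ug else 0‖ = M
      rw [if_pos rfl, norm_mul]
    have hdom : ∀ p ∈ f.coeff.support ×ˢ g.coeff.support, p ≠ (uf, ug) →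
        ‖(fun p : ↥S × ↥S => if p.1 + p.2 = uf + ug then f.coeff p.1 * g.coeff p.2 else 0) p‖ <
        ‖(fun p : ↥S × ↥S => if p.1 + p.2 = uf + ug then f.coeff p.1 * g.coeff p.2 else 0) (uf, ug)‖ := by
      intro p _ hp
      rw [hnorm0]
      show ‖if p.1 + p.2 = uf + ug then f.coeff p.1 * g.coeff p.2 else 0‖ < M
      by_cases h : p.1 + p.2 = uf + ug
      · rw [if_pos h]
        refine lt_of_le_of_ne (key _ _) ?_
        intro heq
        obtain ⟨h1, h2⟩ := key2 _ _ heq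
        have hlt := ord_addlt L hL uf ug p.1 p.2 h1 h2 (by simpa [Prod.ext_iff] using hp)
        rw [h] at hlt
        exact ord_irrefl L hlt
      · rw [if_neg h]
        simpa using hMpos
    have := na_sum_dominant hna (f.coeff.support ×ˢ g.coeff.support)
      (fun p : ↥S × ↥S => if p.1 + p.2 = uf + ug then f.coeff p.1 * g.coeff p.2 else 0) hmem
      (by rw [hnorm0]; exact hMpos) hdom
    rw [this, hnorm0]
  refine ⟨main, ?_, ?_, ?_⟩
  · rw [Finsupp.mem_support_iff]
    intro h0
    rw [h0, norm_zero] at main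
    exact absurd main.symm (ne_of_gt hMpos)
  · intro v
    rw [main]
    exact bound v
  · intro v hv
    rw [main] at hv
    by_contra hcon
    have hlt : L.lt v (uf + ug) := ord_lt_of_not_le L hcon
    have hsmall : ‖(f * g).coeff v‖ < M := by
      rw [hmul v]
      refine na_sum_lt hna _ _ hMpos ?_
      intro p _
      by_cases h : p.1 + p.2 = v
      · rw [if_pos h]
        refine lt_of_le_of_ne (key _ _) ?_
        intro heq
        obtain ⟨h1, h2⟩ := key2 _ _ heq
        have hle : L.le (uf + ug) v := by
          have := ord_addle L hL uf ug p.1 p.2 h1 h2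
          rwa [h] at this
        exact ord_asymm L hlt hle
      · rw [if_neg h]
        simpa using hMpos
    rw [hv] at hsmall
    exact absurd hsmall (lt_irrefl _)
end

section
/- For nonzero f, g in the monoid algebra K[S] over a non-Archimedean valued field, with u_f, u_g defined as the minimal indices achieving the maximal coefficient absolute value: for every u < u_f + u_g, the coefficient of χ^u in fg satisfies |c_{fg,u}| < |c_{f,u_f}|·|c_{g,u_g}|. -/
lemma norm_sum_lt_of_forall_lt {K : Type*} [NormedField K]
    (hna : ∀ a b : K, ‖a + b‖ ≤ max ‖a‖ ‖b‖) {ι : Type*} (s : Finset ι) (F : ι → K)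
    {C : ℝ} (hC : 0 < C) (h : ∀ i ∈ s, ‖F i‖ < C) : ‖∑ i ∈ s, F i‖ < C := by
  induction s using Finset.cons_induction with
  | empty => simpa using hC
  | cons a s ha ih =>
    rw [Finset.sum_cons]
    refine lt_of_le_of_lt (hna _ _) (max_lt (h a (Finset.mem_cons_self a s)) ?_)
    exact ih fun i hi => h i (Finset.mem_cons_of_mem hi)

/-- For nonzero `f, g` in `K[S]` over a non-Archimedean field with leading indices `u_f, u_g`:
for every `u < u_f + u_g`, the coefficient of `χ^u` in `fg` satisfies
`|c_{fg,u}| < |c_{f,u_f}|·|c_{g,u_g}|`. -/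
theorem coeff_lt_of_lt_leadIdx {n : ℕ} {K : Type*} [NormedField K]
    (hna : ∀ a b : K, ‖a + b‖ ≤ max ‖a‖ ‖b‖)
    (S : AddSubmonoid (Fin n → ℤ)) (L : LinearOrder ↥S)
    (hL : ∀ u v w : ↥S, L.lt u v → L.lt (u + w) (v + w))
    (f g : AddMonoidAlgebra K ↥S) (hf : f ≠ 0) (hg : g ≠ 0)
    (uf ug : ↥S) (huf : IsLeadIdx L f uf) (hug : IsLeadIdx L g ug) :
    ∀ u : ↥S, L.lt u (uf + ug) → ‖(f * g).coeff u‖ < ‖f.coeff uf‖ * ‖g.coeff ug‖ := by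
  intro u hu
  obtain ⟨hufs, hfmax, hfmin⟩ := huf
  obtain ⟨hugs, hgmax, hgmin⟩ := hug
  have hf0 : 0 < ‖f.coeff uf‖ := by
    simpa [norm_pos_iff] using Finsupp.mem_support_iff.mp hufs
  have hg0 : 0 < ‖g.coeff ug‖ := by
    simpa [norm_pos_iff] using Finsupp.mem_support_iff.mp hugs
  have hC : 0 < ‖f.coeff uf‖ * ‖g.coeff ug‖ := mul_pos hf0 hg0
  rw [AddMonoidAlgebra.mul_apply]
  refine norm_sum_lt_of_forall_lt hna _ _ hC fun a ha => ?_
  refine norm_sum_lt_of_forall_lt hna _ _ hC fun b hb => ?_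
  simp only []
  by_cases hab : a + b = u
  · rw [if_pos hab, norm_mul]
    -- not both coefficients can achieve the max
    have key : ‖f.coeff a‖ < ‖f.coeff uf‖ ∨ ‖g.coeff b‖ < ‖g.coeff ug‖ := by
      by_contra hcon
      push_neg at hcon
      have hfa : ‖f.coeff a‖ = ‖f.coeff uf‖ := le_antisymm (hfmax a) hcon.1
      have hgb : ‖g.coeff b‖ = ‖g.coeff ug‖ := le_antisymm (hgmax b) hcon.2
      have h1 : L.le uf a := hfmin a hfa
      have h2 : L.le ug b := hgmin b hgb
      have habs : ∀ x y : ↥S, L.le x y → x ≠ y → L.lt x y := fun x y hxy hne =>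
        @lt_of_le_of_ne _ L.toPartialOrder _ _ hxy hne
      have hle : L.le (uf + ug) (a + b) := by
        have s1 : L.le (uf + ug) (a + ug) := by
          rcases eq_or_ne uf a with rfl | hne
          · exact L.le_refl _
          · exact @le_of_lt _ L.toPreorder _ _ (hL _ _ _ (habs _ _ h1 hne))
        have s2 : L.le (a + ug) (a + b) := by
          rcases eq_or_ne ug b with rfl | hne
          · exact L.le_refl _
          · have := hL ug b a (habs _ _ h2 hne)
            rw [add_comm ug a, add_comm b a] at this
            exact @le_of_lt _ L.toPreorder _ _ this
        exact L.le_trans _ _ _ s1 s2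
      rw [hab] at hle
      exact @not_le_of_gt _ L.toPreorder _ _ hu hle
    rcases key with h | h
    · calc ‖f.coeff a‖ * ‖g.coeff b‖ ≤ ‖f.coeff a‖ * ‖g.coeff ug‖ :=
            mul_le_mul_of_nonneg_left (hgmax b) (norm_nonneg _)
        _ < ‖f.coeff uf‖ * ‖g.coeff ug‖ := mul_lt_mul_of_pos_right h hg0

    · calc ‖f.coeff a‖ * ‖g.coeff b‖ ≤ ‖f.coeff uf‖ * ‖g.coeff b‖ :=
            mul_le_mul_of_nonneg_right (hfmax a) (norm_nonneg _)
        _ < ‖f.coeff uf‖ * ‖g.coeff ug‖ := by exact mul_lt_mul_of_pos_left h hf0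
  · rw [if_neg hab, norm_zero]
    exact hC
end
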